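/- Let v_1,...,v_n ∈ ℝ^m with all coordinates v_{1,i} ≥ 0, r ∈ [0,1], and z_i = ∑_{j=2}^{n} |v_{j,i}|. With B^L and B^R the (appropriately translated) bounding boxes of the left and right split parallelotopes as in the split of v_1 by ratio r, the volume of B^L ∪ B^R equals ∏_i (r v_{1,i} + z_i) + ∏_i ((1−r) v_{1,i} + z_i) − ∏_i z_i. -/
import Mathlib


open MeasureTheory Set

/-- Parallelotope generated by vectors `v 0, …, v n` in `ℝ^m`. -/
def parallelotope {n m : ℕ} (v : Fin n → Fin m → ℝ) : Set (Fin m → ℝ) :=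
  {x | ∃ t : Fin n → ℝ, (∀ j, t j ∈ Set.Icc (0:ℝ) 1) ∧ x = ∑ j, t j • v j}

/-- Smallest axis-aligned bounding box of a set in `ℝ^m`. -/
def bbox {m : ℕ} (P : Set (Fin m → ℝ)) : Set (Fin m → ℝ) :=
  Set.univ.pi fun i => Set.Icc (sInf ((fun x => x i) '' P)) (sSup ((fun x => x i) '' P))

lemma bbox_parallelotope {n m : ℕ} (v : Fin n → Fin m → ℝ) :
    bbox (parallelotope v) =
      Set.univ.pi fun i => Set.Icc (∑ j, min (v j i) 0) (∑ j, max (v j i) 0) := by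
  have hI : ∀ i, IsLeast ((fun x => x i) '' parallelotope v) (∑ j, min (v j i) 0) := by
    intro i
    constructor
    · refine ⟨∑ j, (if v j i ≤ 0 then (1:ℝ) else 0) • v j,
        ⟨fun j => if v j i ≤ 0 then 1 else 0, fun j => ?_, rfl⟩, ?_⟩
      · dsimp only; split <;> simp
      · simp only [Finset.sum_apply, Pi.smul_apply, smul_eq_mul]
        refine Finset.sum_congr rfl fun j _ => ?_
        rcases le_or_gt (v j i) 0 with h | h
        · simp [h, min_eq_left h]
        · simp [not_le.mpr h, min_eq_right h.le]
    · rintro y ⟨x, ⟨t, ht, rfl⟩, rfl⟩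
      simp only [Finset.sum_apply, Pi.smul_apply, smul_eq_mul]
      refine Finset.sum_le_sum fun j _ => ?_
      rcases le_total (v j i) 0 with h | h
      · rw [min_eq_left h]
        nlinarith [(ht j).1, (ht j).2]
      · rw [min_eq_right h]
        exact mul_nonneg (ht j).1 h
  have hS : ∀ i, IsGreatest ((fun x => x i) '' parallelotope v) (∑ j, max (v j i) 0) := by
    intro i
    constructor
    · refine ⟨∑ j, (if 0 ≤ v j i then (1:ℝ) else 0) • v j,
        ⟨fun j => if 0 ≤ v j i then 1 else 0, fun j => ?_, rfl⟩, ?_⟩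
      · dsimp only; split <;> simp
      · simp only [Finset.sum_apply, Pi.smul_apply, smul_eq_mul]
        refine Finset.sum_congr rfl fun j _ => ?_
        rcases le_or_gt 0 (v j i) with h | h
        · simp [h, max_eq_left h]
        · simp [not_le.mpr h, max_eq_right h.le]
    · rintro y ⟨x, ⟨t, ht, rfl⟩, rfl⟩
      simp only [Finset.sum_apply, Pi.smul_apply, smul_eq_mul]
      refine Finset.sum_le_sum fun j _ => ?_
      rcases le_total 0 (v j i) with h | h
      · rw [max_eq_left h]
        nlinarith [(ht j).1, (ht j).2]
      · rw [max_eq_right h]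
        exact mul_nonpos_of_nonneg_of_nonpos (ht j).1 h
  unfold bbox
  exact Set.pi_congr rfl fun i _ => by rw [(hI i).csInf_eq, (hS i).csSup_eq]

lemma image_add_pi {m : ℕ} (a b c : Fin m → ℝ) :
    (fun x => x + c) '' (Set.univ.pi fun i => Set.Icc (a i) (b i)) =
      Set.univ.pi fun i => Set.Icc (a i + c i) (b i + c i) := by
  ext y
  simp only [Set.mem_image, Set.mem_pi, Set.mem_univ, true_implies, Set.mem_Icc]
  constructor
  · rintro ⟨x, hx, rfl⟩ i
    have := hx i
    simp only [Pi.add_apply]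
    constructor <;> linarith [this.1, this.2]
  · intro hy
    refine ⟨y - c, fun i => ?_, by simp⟩
    have := hy i
    simp only [Pi.sub_apply]
    constructor <;> linarith [this.1, this.2]


theorem volume_union_of_split_boxes {n m : ℕ} (v : Fin (n + 1) → Fin m → ℝ) (r : ℝ)
    (hr : r ∈ Set.Icc (0:ℝ) 1) (hv : ∀ i, 0 ≤ v 0 i) :
    let z : Fin m → ℝ := fun i => ∑ j ∈ Finset.univ.erase 0, |v j i|
    let BL := bbox (parallelotope (Function.update v 0 (r • v 0)))
    let BR := (fun x => x + r • v 0) ''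
      bbox (parallelotope (Function.update v 0 ((1 - r) • v 0)))
    volume (BL ∪ BR) =
      ENNReal.ofReal
        (∏ i, (r * v 0 i + z i) + ∏ i, ((1 - r) * v 0 i + z i) - ∏ i, z i) := by
  intro z BL BR
  obtain ⟨hr0, hr1⟩ := hr
  set N : Fin m → ℝ := fun i => ∑ j ∈ Finset.univ.erase 0, min (v j i) 0 with hN
  set P : Fin m → ℝ := fun i => ∑ j ∈ Finset.univ.erase 0, max (v j i) 0 with hP
  have hzPN : ∀ i, z i = P i - N i := by
    intro i
    simp only [z, hP, hN, ← Finset.sum_sub_distrib]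
    refine Finset.sum_congr rfl fun j _ => ?_
    rcases le_total 0 (v j i) with h | h
    · rw [abs_of_nonneg h, max_eq_left h, min_eq_right h, sub_zero]
    · rw [abs_of_nonpos h, max_eq_right h, min_eq_left h, zero_sub]
  have hz0 : ∀ i, 0 ≤ z i := fun i => Finset.sum_nonneg fun j _ => abs_nonneg _
  have key : ∀ c : ℝ, 0 ≤ c →
      bbox (parallelotope (Function.update v 0 (c • v 0))) =
        Set.univ.pi fun i => Set.Icc (N i) (c * v 0 i + P i) := by
    intro c hc
    rw [bbox_parallelotope]
    refine Set.pi_congr rfl fun i _ => ?_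
    have h0 : (0 : Fin (n+1)) ∈ Finset.univ := Finset.mem_univ _
    rw [← Finset.add_sum_erase _ _ h0, ← Finset.add_sum_erase _ _ h0]
    have hupd : ∀ j ∈ Finset.univ.erase (0 : Fin (n+1)),
        Function.update v 0 (c • v 0) j = v j :=
      fun j hj => Function.update_of_ne (Finset.ne_of_mem_erase hj) _ _
    have e1 : ∑ j ∈ Finset.univ.erase 0, min (Function.update v 0 (c • v 0) j i) 0 = N i :=
      Finset.sum_congr rfl fun j hj => by rw [hupd j hj]
    have e2 : ∑ j ∈ Finset.univ.erase 0, max (Function.update v 0 (c • v 0) j i) 0 = P i :=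
      Finset.sum_congr rfl fun j hj => by rw [hupd j hj]
    have hcv : 0 ≤ c * v 0 i := mul_nonneg hc (hv i)
    rw [e1, e2, Function.update_self, Pi.smul_apply, smul_eq_mul,
      min_eq_right hcv, max_eq_left hcv, zero_add]
  have hBL : BL = Set.univ.pi fun i => Set.Icc (N i) (r * v 0 i + P i) := key r hr0
  have hBR : BR = Set.univ.pi fun i => Set.Icc (N i + r * v 0 i) (v 0 i + P i) := by
    show (fun x => x + r • v 0) '' _ = _
    rw [key (1 - r) (by linarith), image_add_pi N (fun i => (1 - r) * v 0 i + P i) (r • v 0)]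
    refine Set.pi_congr rfl fun i _ => ?_
    simp only [Pi.smul_apply, smul_eq_mul]
    congr 1 <;> ring
  have hmeas : ∀ (a b : Fin m → ℝ), MeasurableSet (Set.univ.pi fun i => Set.Icc (a i) (b i)) :=
    fun a b => MeasurableSet.univ_pi fun i => measurableSet_Icc
  have hvol : ∀ (a b : Fin m → ℝ), (∀ i, a i ≤ b i) →
      volume (Set.univ.pi fun i => Set.Icc (a i) (b i)) =
        ENNReal.ofReal (∏ i, (b i - a i)) := by
    intro a b hab
    rw [volume_pi_pi]
    simp only [Real.volume_Icc]
    rw [← ENNReal.ofReal_prod_of_nonneg (fun i _ => sub_nonneg.mpr (hab i))]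
  have hNn : ∀ i, N i ≤ 0 := fun i => Finset.sum_nonpos fun j _ => min_le_right _ _
  have hPn : ∀ i, 0 ≤ P i := fun i => Finset.sum_nonneg fun j _ => le_max_right _ _
  have hrv : ∀ i, 0 ≤ r * v 0 i := fun i => mul_nonneg hr0 (hv i)
  have hrv' : ∀ i, 0 ≤ (1 - r) * v 0 i := fun i => mul_nonneg (by linarith) (hv i)
  have hvBL : volume BL = ENNReal.ofReal (∏ i, (r * v 0 i + z i)) := by
    rw [hBL, hvol _ _ (fun i => by nlinarith [hrv i, hNn i, hPn i])]
    congr 1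
    exact Finset.prod_congr rfl fun i _ => by rw [hzPN i]; ring
  have hvBR : volume BR = ENNReal.ofReal (∏ i, ((1 - r) * v 0 i + z i)) := by
    rw [hBR, hvol _ _ (fun i => by nlinarith [hrv i, hrv' i, hNn i, hPn i])]
    congr 1
    exact Finset.prod_congr rfl fun i _ => by rw [hzPN i]; ring
  have hint : BL ∩ BR = Set.univ.pi fun i => Set.Icc (N i + r * v 0 i) (r * v 0 i + P i) := by
    rw [hBL, hBR, ← Set.pi_inter_distrib]
    refine Set.pi_congr rfl fun i _ => ?_
    rw [Set.Icc_inter_Icc]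
    have h1 : 0 ≤ r * v 0 i := hrv i
    have h2 : r * v 0 i ≤ v 0 i := by nlinarith [hv i]
    rw [sup_eq_right.mpr (show N i ≤ N i + r * v 0 i by linarith),
      inf_eq_left.mpr (show r * v 0 i + P i ≤ v 0 i + P i by linarith)]
  have hvI : volume (BL ∩ BR) = ENNReal.ofReal (∏ i, z i) := by
    rw [hint, hvol _ _ (fun i => by nlinarith [hz0 i, hzPN i, hNn i, hPn i])]
    congr 1
    exact Finset.prod_congr rfl fun i _ => by rw [hzPN i]; ring
  have hL : 0 ≤ ∏ i, (r * v 0 i + z i) :=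
    Finset.prod_nonneg fun i _ => add_nonneg (hrv i) (hz0 i)
  have hR : 0 ≤ ∏ i, ((1 - r) * v 0 i + z i) :=
    Finset.prod_nonneg fun i _ => add_nonneg (hrv' i) (hz0 i)
  have hZ0 : 0 ≤ ∏ i, z i := Finset.prod_nonneg fun i _ => hz0 i
  have hZle : ∏ i, z i ≤ ∏ i, (r * v 0 i + z i) :=
    Finset.prod_le_prod (fun i _ => hz0 i) (fun i _ => le_add_of_nonneg_left (hrv i))
  have htBR : MeasurableSet BR := by rw [hBR]; exact hmeas _ _
  have main : volume (BL ∪ BR) + ENNReal.ofReal (∏ i, z i) =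
      ENNReal.ofReal
        (∏ i, (r * v 0 i + z i) + ∏ i, ((1 - r) * v 0 i + z i) - ∏ i, z i) +
        ENNReal.ofReal (∏ i, z i) := by
    have hsub : 0 ≤ ∏ i, (r * v 0 i + z i) + ∏ i, ((1 - r) * v 0 i + z i) - ∏ i, z i := by
      linarith
    rw [← ENNReal.ofReal_add hsub hZ0, sub_add_cancel, ENNReal.ofReal_add hL hR,
      ← hvBL, ← hvBR, ← hvI]
    exact measure_union_add_inter BL htBR
  exact (ENNReal.add_left_inj ENNReal.ofReal_ne_top).mp main
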